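/- In the single-step mean-field model, given that the current empirical state distribution is z ∈ Δ_n(X) and all subsystems apply the prescription γ : X → U, the distribution of the next empirical distribution Z' is the same for every configuration x ∈ Xⁿ with empirical distribution z. Equivalently, for any two tuples x, x̃ ∈ Xⁿ having the same empirical distribution z, the random vectors (f(z, x^i, γ(x^i), W^i))_{i=1}^n and (f(z, x̃^i, γ(x̃^i), W^i))_{i=1}^n induce the same distribution on the empirical distribution of their components. -/

import Mathlib

/-!
If `emp x = emp xt`, then `xt = x ∘ σ` for a permutation `σ` of the indices, obtained by matching
the fibres of `x` and `xt`. Permuting the coordinates of an i.i.d. noise vector does not change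
its law, and permuting the coordinates of the outcome tuple does not change its empirical
distribution, so the two laws of the next empirical distribution coincide.
-/

open scoped ENNReal

/-- Empirical distribution (mean field) of a tuple of `n` points in a finite set `X`. -/
noncomputable def emp {X : Type*} [Fintype X] [DecidableEq X] {n : ℕ} (x : Fin n → X) :
    X → ℝ :=
  fun a => ((Finset.univ.filter fun i => x i = a).card : ℝ) / n

theorem PMF.map_equiv_eq_self {α : Type*} (μ : PMF α) (e : α ≃ α) (he : ∀ a, μ (e a) = μ a) :
    μ.map e = μ := by
  ext b
  rw [PMF.map_apply, tsum_eq_single (e.symm b) fun a ha => if_neg fun hb => ha (by simp [hb])]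
  simpa using (he (e.symm b)).symm

theorem PMF.map_comp_perm_eq_self_of_iid {ι W : Type*} [Fintype ι] (ν : W → ℝ≥0∞)
    (μ : PMF (ι → W)) (hiid : ∀ w, μ w = ∏ i, ν (w i)) (τ : Equiv.Perm ι) :
    μ.map (· ∘ τ) = μ :=
  μ.map_equiv_eq_self (τ.symm.arrowCongr (.refl W)) fun w => by
    simpa [hiid] using Equiv.prod_comp τ fun i => ν (w i)

section Emp

variable {X : Type*} [Fintype X] [DecidableEq X] {n : ℕ}

theorem emp_comp_perm (y : Fin n → X) (σ : Equiv.Perm (Fin n)) : emp (y ∘ σ) = emp y := by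
  funext a
  unfold emp
  congr 2
  exact Finset.card_equiv σ (by simp)

theorem card_filter_eq_of_emp_eq {x xt : Fin n → X} (h : emp x = emp xt) (a : X) :
    (Finset.univ.filter fun i => x i = a).card = (Finset.univ.filter fun i => xt i = a).card := by
  rcases n.eq_zero_or_pos with rfl | hn
  · simp
  · have ha := congrFun h a
    unfold emp at ha
    rw [div_left_inj' (by positivity)] at ha
    exact_mod_cast ha

theorem exists_perm_of_emp_eq {x xt : Fin n → X} (h : emp x = emp xt) :
    ∃ σ : Equiv.Perm (Fin n), xt = x ∘ σ := by
  have fiber (a : X) : {i // xt i = a} ≃ {i // x i = a} :=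
    Fintype.equivOfCardEq <| by
      simp only [Fintype.card_subtype, card_filter_eq_of_emp_eq h a]
  exact ⟨Equiv.ofFiberEquiv fiber, funext fun i => (Equiv.ofFiberEquiv_map fiber i).symm⟩

theorem map_emp_eq_of_emp_eq {W Y : Type*} [Fintype Y] [DecidableEq Y] (g : X → W → Y)
    (μ : PMF (Fin n → W)) (hμ : ∀ τ : Equiv.Perm (Fin n), μ.map (· ∘ τ) = μ)
    {x xt : Fin n → X} (h : emp x = emp xt) :
    μ.map (fun w => emp fun i => g (x i) (w i)) =
      μ.map (fun w => emp fun i => g (xt i) (w i)) := by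
  obtain ⟨σ, rfl⟩ := exists_perm_of_emp_eq h
  have hcomp : (fun w => emp fun i => g (x i) (w i)) =
      (fun w => emp fun i => g (x (σ i)) (w i)) ∘ (· ∘ σ) :=
    funext fun w => (emp_comp_perm _ σ).symm
  rw [hcomp, ← PMF.map_comp, hμ]
  rfl

end Emp

theorem next_mean_field_law_well_defined_general {X U W : Type*}
    [Fintype X] [DecidableEq X]
    {n : ℕ}
    (f : (X → ℝ) → X → U → W → X) (γ : X → U)
    (ν : W → ℝ≥0∞) (μ : PMF (Fin n → W))
    (hiid : ∀ w : Fin n → W, μ w = ∏ i, ν (w i))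
    (z : X → ℝ) (x xt : Fin n → X)
    (hx : emp x = z) (hxt : emp xt = z) :
    μ.map (fun w => emp (fun i => f z (x i) (γ (x i)) (w i))) =
      μ.map (fun w => emp (fun i => f z (xt i) (γ (xt i)) (w i))) :=
  map_emp_eq_of_emp_eq (fun a => f z a (γ a)) μ (μ.map_comp_perm_eq_self_of_iid ν hiid)
    (hx.trans hxt.symm)

/-- Single-step mean-field model: if two configurations `x, x̃ ∈ Xⁿ` have the same
empirical distribution `z`, then under i.i.d. noises `W¹,…,Wⁿ` (with common law `ν`)
and a common prescription `γ`, the next empirical distributions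
`emp (f(z, xⁱ, γ(xⁱ), Wⁱ))ᵢ` and `emp (f(z, x̃ⁱ, γ(x̃ⁱ), Wⁱ))ᵢ` have the same
distribution. -/
theorem next_mean_field_law_well_defined {X U W : Type*}
    [Fintype X] [DecidableEq X] [Fintype U] [Fintype W] [DecidableEq W]
    {n : ℕ} (hn : 1 ≤ n)
    (f : (X → ℝ) → X → U → W → X) (γ : X → U)
    (ν : W → ℝ≥0∞) (μ : PMF (Fin n → W))
    (hiid : ∀ w : Fin n → W, μ w = ∏ i, ν (w i))
    (z : X → ℝ) (x xt : Fin n → X)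
    (hx : emp x = z) (hxt : emp xt = z) :
    μ.map (fun w => emp (fun i => f z (x i) (γ (x i)) (w i))) =
      μ.map (fun w => emp (fun i => f z (xt i) (γ (xt i)) (w i))) :=
  next_mean_field_law_well_defined_general f γ ν μ hiid z x xt hx hxt
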